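/- Let Ω ⊆ ℝ^d be a bounded open set equipped with a Gauss–Green partition K_1, …, K_M with boundary measures σ_j and outward unit normals n_j. Let L : ℝ^d × ℝ × ℝ^d → ℝ be twice continuously differentiable, let U : cl(Ω) → ℝ be continuous with U restricted to each K_j extending to C²(cl(K_j)), and let V : cl(Ω) → ℝ be continuous with V restricted to each K_j extending to C¹(cl(K_j)). If the function ε ↦ ∫_Ω L(x, U + εV, ∇U + ε∇V) dx is differentiable at ε = 0 with derivative 0, then the discrete Euler–Lagrange identity holds: 0 = Σ_{j} ∫_{K_j} ( −div(L_p(·,U,∇U)) + L_u(·,U,∇U) ) V dx + Σ_{j} ∫_{∂K_j} ( L_p(·,U,∇U) · n_j ) V dσ_j. -/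

import Mathlib

/-!
Differentiating under the integral sign (the ε-derivative of the integrand is continuous on the
compact set `[-1, 1] × cl Ω`, hence dominated) turns criticality of the action into the weak
Euler–Lagrange equation `∑ⱼ ∫_{Kⱼ} (L_u V + L_p · ∇V) = 0`. On each piece, the Gauss–Green
identity for the `C¹` field `V • L_p`, whose divergence is `V div L_p + ∇V · L_p`, trades
`∫ L_p · ∇V` for the boundary term minus `∫ V div L_p`.
-/

open MeasureTheory RealInnerProductSpace
open scoped BigOperators

noncomputable section

/-- `ℝ^d` as a Euclidean (inner product) space. -/
abbrev Euc (d : ℕ) := EuclideanSpace ℝ (Fin d)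

/-- Divergence of a vector field on `ℝ^d`. -/
noncomputable def pdiv {d : ℕ} (F : Euc d → Euc d) (x : Euc d) : ℝ :=
  ∑ i, fderiv ℝ F x (EuclideanSpace.single i 1) i

/-- `x ↦ L(x, u(x), ∇u(x))`, the Lagrangian evaluated along `u`. -/
noncomputable def lagAlong {d : ℕ} (L : Euc d → ℝ → Euc d → ℝ) (u : Euc d → ℝ)
    (x : Euc d) : ℝ :=
  L x (u x) (gradient u x)

/-- `L_u(x, u(x), ∇u(x))`, the partial derivative of `L` in its second argument
evaluated along `u`. -/
noncomputable def lagU {d : ℕ} (L : Euc d → ℝ → Euc d → ℝ) (u : Euc d → ℝ)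
    (x : Euc d) : ℝ :=
  deriv (fun s => L x s (gradient u x)) (u x)

/-- `L_p(x, u(x), ∇u(x))`, the gradient of `L` in its third argument
evaluated along `u`. -/
noncomputable def lagP {d : ℕ} (L : Euc d → ℝ → Euc d → ℝ) (u : Euc d → ℝ)
    (x : Euc d) : Euc d :=
  gradient (fun p => L x (u x) p) (gradient u x)

/-- A Gauss–Green partition of a bounded open set `Ω ⊆ ℝ^d`: finitely many pairwise
disjoint open pieces whose closures cover `cl(Ω)`, each equipped with a finite Borel
boundary measure `σ i` supported on `∂(piece i)` and an outward unit normal field,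
such that the Gauss–Green (divergence) theorem holds on each piece for `C¹` vector
fields. -/
structure GGPartition (d : ℕ) (Ω : Set (Euc d)) (N : ℕ) where
  piece : Fin N → Set (Euc d)
  isOpen_piece : ∀ i, IsOpen (piece i)
  disjoint_piece : ∀ i j, i ≠ j → Disjoint (piece i) (piece j)
  cover : (⋃ i, closure (piece i)) = closure Ω
  σ : Fin N → Measure (Euc d)
  σ_finite : ∀ i, IsFiniteMeasure (σ i)
  σ_support : ∀ i, σ i ((frontier (piece i))ᶜ) = 0
  normal : Fin N → Euc d → Euc d
  normal_meas : ∀ i, Measurable (normal i)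
  normal_bdd : ∀ i x, ‖normal i x‖ ≤ 1
  normal_unit : ∀ i, ∀ x ∈ frontier (piece i), ‖normal i x‖ = 1
  gauss_green : ∀ i (F : Euc d → Euc d), ContDiff ℝ 1 F →
    ∫ x in piece i, pdiv F x = ∫ x, ⟪F x, normal i x⟫ ∂(σ i)

section Gradient

variable {F : Type*} [NormedAddCommGroup F] [InnerProductSpace ℝ F] [CompleteSpace F]

theorem ContDiff.gradient {f : F → ℝ} {k m : WithTop ℕ∞} (hf : ContDiff ℝ k f)
    (hmk : m + 1 ≤ k) : ContDiff ℝ m (gradient f) :=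
  (InnerProductSpace.toDual ℝ F).symm.contDiff.comp (hf.fderiv_right hmk)

end Gradient

theorem Continuous.integrableOn_of_isBounded {X E : Type*} [MetricSpace X] [ProperSpace X]
    [MeasurableSpace X] [OpensMeasurableSpace X] [NormedAddCommGroup E]
    {μ : Measure X} [IsFiniteMeasureOnCompacts μ] {f : X → E} (hf : Continuous f)
    {s : Set X} (hs : Bornology.IsBounded s) : IntegrableOn f s μ :=
  (hf.locallyIntegrable.integrableOn_isCompact hs.isCompact_closure).mono_set subset_closure

theorem hasDerivAt_setIntegral_of_continuous {X E : Type*} [MetricSpace X] [ProperSpace X]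
    [MeasurableSpace X] [OpensMeasurableSpace X] [NormedAddCommGroup E] [NormedSpace ℝ E]
    [CompleteSpace E] {μ : Measure X} [IsFiniteMeasureOnCompacts μ] {s : Set X}
    (hs : MeasurableSet s) (hsb : Bornology.IsBounded s) {F F' : ℝ → X → E}
    (hF : ∀ ε, Continuous (F ε)) (hF' : Continuous (Function.uncurry F'))
    (hderiv : ∀ ε x, HasDerivAt (F · x) (F' ε x) ε) :
    HasDerivAt (fun ε => ∫ x in s, F ε x ∂μ) (∫ x in s, F' 0 x ∂μ) 0 := by
  obtain ⟨C, hC⟩ := ((isCompact_closedBall (0 : ℝ) 1).prod hsb.isCompact_closure)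
    |>.exists_bound_of_continuousOn hF'.continuousOn
  have hbound : ∀ᵐ x ∂μ.restrict s, ∀ ε ∈ Metric.closedBall (0 : ℝ) 1, ‖F' ε x‖ ≤ C := by
    filter_upwards [ae_restrict_mem hs] with x hx ε hε
    exact hC (ε, x) ⟨hε, subset_closure hx⟩
  exact (hasDerivAt_integral_of_dominated_loc_of_deriv_le (bound := fun _ => C)
    (Metric.closedBall_mem_nhds 0 one_pos) (.of_forall fun ε => (hF ε).aestronglyMeasurable)
    ((hF 0).integrableOn_of_isBounded hsb) (hF'.uncurry_left 0).aestronglyMeasurable hbound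
    (integrableOn_const (hsb.measure_lt_top).ne) (.of_forall fun x ε _ => hderiv ε x)).2

section Divergence

variable {d : ℕ}

theorem sum_apply_single_mul (ℓ : Euc d →L[ℝ] ℝ) (y : Euc d) :
    ∑ i, ℓ (EuclideanSpace.single i 1) * y i = ℓ y := by
  conv_rhs => rw [← (EuclideanSpace.basisFun (Fin d) ℝ).sum_repr y]
  simp [mul_comm]

theorem continuous_pdiv {H : Euc d → Euc d} (hH : ContDiff ℝ 1 H) : Continuous (pdiv H) :=
  continuous_finsetSum _ fun i _ => (EuclideanSpace.proj (𝕜 := ℝ) i).continuous.comp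
    ((hH.continuous_fderiv one_ne_zero).clm_apply continuous_const)

theorem pdiv_smul {v : Euc d → ℝ} {H : Euc d → Euc d} {x : Euc d}
    (hv : DifferentiableAt ℝ v x) (hH : DifferentiableAt ℝ H x) :
    pdiv (fun y => v y • H y) x = v x * pdiv H x + fderiv ℝ v x (H x) := by
  simp only [pdiv, fderiv_fun_smul hv hH, _root_.add_apply,
    _root_.smul_apply, ContinuousLinearMap.smulRight_apply, PiLp.add_apply,
    PiLp.smul_apply, smul_eq_mul, Finset.sum_add_distrib, ← Finset.mul_sum,
    sum_apply_single_mul]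

end Divergence

section Lagrangian

variable {d : ℕ} {L : Euc d → ℝ → Euc d → ℝ} {u : Euc d → ℝ}

def lagUncurry (L : Euc d → ℝ → Euc d → ℝ) (q : Euc d × ℝ × Euc d) : ℝ :=
  L q.1 q.2.1 q.2.2

theorem lagU_eq_fderiv {x : Euc d}
    (hL : DifferentiableAt ℝ (lagUncurry L) (x, u x, gradient u x)) :
    lagU L u x = fderiv ℝ (lagUncurry L) (x, u x, gradient u x) (0, 1, 0) := by
  have hline : HasDerivAt (fun s : ℝ => (x, s, gradient u x)) (0, 1, 0) (u x) :=
    (hasDerivAt_const _ x).prodMk ((hasDerivAt_id _).prodMk (hasDerivAt_const _ _))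
  exact (hL.hasFDerivAt.comp_hasDerivAt _ hline).deriv

theorem lagP_eq_fderiv {x : Euc d}
    (hL : DifferentiableAt ℝ (lagUncurry L) (x, u x, gradient u x)) :
    lagP L u x = (InnerProductSpace.toDual ℝ (Euc d)).symm
      (fderiv ℝ (lagUncurry L) (x, u x, gradient u x) ∘L
        (ContinuousLinearMap.inr ℝ (Euc d) (ℝ × Euc d) ∘L
          ContinuousLinearMap.inr ℝ ℝ (Euc d))) := by
  have hslice := (hasFDerivAt_prodMk_right x (u x, gradient u x)).comp (gradient u x)
    (hasFDerivAt_prodMk_right (𝕜 := ℝ) (u x) (gradient u x))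
  exact (hasFDerivAt_iff_hasGradientAt.mp (hL.hasFDerivAt.comp (gradient u x) hslice)).gradient

theorem fderiv_lagUncurry_apply {x : Euc d}
    (hL : DifferentiableAt ℝ (lagUncurry L) (x, u x, gradient u x)) (b : ℝ) (q : Euc d) :
    fderiv ℝ (lagUncurry L) (x, u x, gradient u x) (0, b, q)
      = lagU L u x * b + ⟪lagP L u x, q⟫ := by
  have hsplit : ((0 : Euc d), b, q) = b • ((0 : Euc d), (1 : ℝ), (0 : Euc d)) + (0, 0, q) := by
    simp
  rw [hsplit, map_add, map_smul, lagU_eq_fderiv hL, lagP_eq_fderiv hL,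
    InnerProductSpace.toDual_symm_apply, smul_eq_mul, mul_comm]
  rfl

theorem continuous_lagU (hL : ContDiff ℝ 1 (lagUncurry L)) (hu : ContDiff ℝ 1 u) :
    Continuous (lagU L u) := by
  have hL' := hL.differentiable one_ne_zero
  simp only [funext fun x => lagU_eq_fderiv (u := u) (hL' (x, u x, gradient u x))]
  exact ((hL.continuous_fderiv one_ne_zero).comp (continuous_id.prodMk
    (hu.continuous.prodMk (hu.gradient (m := 0) (by norm_num)).continuous))).clm_apply
    continuous_const

theorem contDiff_lagP {k m : WithTop ℕ∞} (hL : ContDiff ℝ k (lagUncurry L))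
    (hu : ContDiff ℝ k u) (hmk : m + 1 ≤ k) : ContDiff ℝ m (lagP L u) := by
  have hL' := hL.differentiable (one_pos.trans_le (le_add_self.trans hmk)).ne'
  simp only [funext fun x => lagP_eq_fderiv (u := u) (hL' (x, u x, gradient u x))]
  exact (InnerProductSpace.toDual ℝ (Euc d)).symm.contDiff.comp
    (((hL.fderiv_right hmk).clm_comp contDiff_const).comp
      (contDiff_id.prodMk ((hu.of_le (le_self_add.trans hmk)).prodMk (hu.gradient hmk))))

end Lagrangian

theorem hasDerivAt_integral_lagrangian {d : ℕ} {L : Euc d → ℝ → Euc d → ℝ}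
    {u v : Euc d → ℝ} {s : Set (Euc d)} (hL : ContDiff ℝ 1 (lagUncurry L))
    (hu : ContDiff ℝ 1 u) (hv : ContDiff ℝ 1 v) (hs : MeasurableSet s)
    (hsb : Bornology.IsBounded s) :
    HasDerivAt (fun ε : ℝ => ∫ x in s, L x (u x + ε * v x) (gradient u x + ε • gradient v x))
      (∫ x in s, (lagU L u x * v x + ⟪lagP L u x, gradient v x⟫)) 0 := by
  set path : ℝ → Euc d → Euc d × ℝ × Euc d :=
    fun ε x => (x, u x + ε * v x, gradient u x + ε • gradient v x)
  have hgu := (hu.gradient (m := 0) (by norm_num)).continuous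
  have hgv := (hv.gradient (m := 0) (by norm_num)).continuous
  have hpath : Continuous (Function.uncurry path) := by fun_prop
  have hderiv : ∀ ε x, HasDerivAt (fun t => lagUncurry L (path t x))
      (fderiv ℝ (lagUncurry L) (path ε x) (0, v x, gradient v x)) ε := by
    intro ε x
    have hline : HasDerivAt (path · x) (0, v x, gradient v x) ε := by
      refine (hasDerivAt_const _ x).prodMk (HasDerivAt.prodMk ?_ ?_)
      · simpa using ((hasDerivAt_id ε).mul_const (v x)).const_add (u x)
      · simpa using ((hasDerivAt_id ε).smul_const (gradient v x)).const_add (gradient u x)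
    exact ((hL.differentiable one_ne_zero) _).hasFDerivAt.comp_hasDerivAt ε hline
  have hF' : Continuous (Function.uncurry fun ε x =>
      fderiv ℝ (lagUncurry L) (path ε x) (0, v x, gradient v x)) :=
    ((hL.continuous_fderiv one_ne_zero).comp hpath).clm_apply (by fun_prop)
  refine (hasDerivAt_setIntegral_of_continuous hs hsb
    (fun ε => hL.continuous.comp (hpath.uncurry_left ε)) hF' hderiv).congr_deriv ?_
  refine integral_congr_ae (.of_forall fun x => ?_)
  simp only [path, zero_mul, zero_smul, add_zero]
  exact fderiv_lagUncurry_apply ((hL.differentiable one_ne_zero) _) _ _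

namespace GGPartition

variable {d N : ℕ} {Ω : Set (Euc d)} (T : GGPartition d Ω N)

theorem isBounded_piece (hΩ : Bornology.IsBounded Ω) (j : Fin N) :
    Bornology.IsBounded (T.piece j) :=
  hΩ.closure.subset <| subset_closure.trans <|
    T.cover ▸ Set.subset_iUnion (fun i => closure (T.piece i)) j

theorem integral_mul_pdiv_add_inner_gradient (j : Fin N) {v : Euc d → ℝ} {H : Euc d → Euc d}
    (hv : ContDiff ℝ 1 v) (hH : ContDiff ℝ 1 H) :
    ∫ x in T.piece j, (v x * pdiv H x + ⟪H x, gradient v x⟫)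
      = ∫ x, ⟪H x, T.normal j x⟫ * v x ∂(T.σ j) :=
  calc ∫ x in T.piece j, (v x * pdiv H x + ⟪H x, gradient v x⟫)
      = ∫ x in T.piece j, pdiv (fun y => v y • H y) x := by
        refine integral_congr_ae (.of_forall fun x => ?_)
        beta_reduce
        rw [pdiv_smul (hv.differentiable one_ne_zero x) (hH.differentiable one_ne_zero x),
          real_inner_comm, inner_gradient_left]
    _ = ∫ x, ⟪v x • H x, T.normal j x⟫ ∂(T.σ j) := T.gauss_green j _ (hv.smul hH)
    _ = ∫ x, ⟪H x, T.normal j x⟫ * v x ∂(T.σ j) := by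
        simp_rw [real_inner_smul_left, mul_comm]

theorem integral_neg_pdiv_add_mul_add_boundary (hΩ : Bornology.IsBounded Ω) (j : Fin N)
    {g v : Euc d → ℝ} {H : Euc d → Euc d} (hg : Continuous g) (hv : ContDiff ℝ 1 v)
    (hH : ContDiff ℝ 1 H) :
    (∫ x in T.piece j, (-pdiv H x + g x) * v x) + ∫ x, ⟪H x, T.normal j x⟫ * v x ∂(T.σ j)
      = ∫ x in T.piece j, (g x * v x + ⟪H x, gradient v x⟫) := by
  have hK := T.isBounded_piece hΩ j
  have hdivH := continuous_pdiv hH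
  have hgv := (hv.gradient (m := 0) (by norm_num)).continuous
  have hstrong : IntegrableOn (fun x => (-pdiv H x + g x) * v x) (T.piece j) :=
    ((hdivH.neg.add hg).mul hv.continuous).integrableOn_of_isBounded hK
  have hdiv : IntegrableOn (fun x => v x * pdiv H x + ⟪H x, gradient v x⟫) (T.piece j) :=
    ((hv.continuous.mul hdivH).add (hH.continuous.inner hgv)).integrableOn_of_isBounded hK
  rw [← T.integral_mul_pdiv_add_inner_gradient j hv hH, ← integral_add hstrong hdiv]
  refine integral_congr_ae (.of_forall fun x => ?_)
  ring

end GGPartition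

theorem discrete_euler_lagrange_general {d M : ℕ} (Ω : Set (Euc d))
    (hΩb : Bornology.IsBounded Ω)
    (T : GGPartition d Ω M)
    (L : Euc d → ℝ → Euc d → ℝ)
    (hL : ContDiff ℝ 2 (fun q : Euc d × ℝ × Euc d => L q.1 q.2.1 q.2.2))
    (Uext : Fin M → Euc d → ℝ) (hUext : ∀ j, ContDiff ℝ 2 (Uext j))
    (Vext : Fin M → Euc d → ℝ) (hVext : ∀ j, ContDiff ℝ 1 (Vext j))
    (hcrit : HasDerivAt
      (fun ε : ℝ => ∑ j, ∫ x in T.piece j,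
        L x (Uext j x + ε * Vext j x)
          (gradient (Uext j) x + ε • gradient (Vext j) x))
      0 0) :
    0 = (∑ j, ∫ x in T.piece j,
          (-(pdiv (lagP L (Uext j)) x) + lagU L (Uext j) x) * Vext j x)
      + ∑ j, ∫ x, ⟪lagP L (Uext j) x, T.normal j x⟫ * Vext j x ∂(T.σ j) := by
  have hL : ContDiff ℝ 2 (lagUncurry L) := hL
  have hL₁ := hL.of_le one_le_two
  have hfirst : HasDerivAt (fun ε : ℝ => ∑ j, ∫ x in T.piece j,
      L x (Uext j x + ε * Vext j x) (gradient (Uext j) x + ε • gradient (Vext j) x))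
      (∑ j, ∫ x in T.piece j,
        (lagU L (Uext j) x * Vext j x + ⟪lagP L (Uext j) x, gradient (Vext j) x⟫)) 0 :=
    HasDerivAt.fun_sum fun j _ => hasDerivAt_integral_lagrangian hL₁
      ((hUext j).of_le one_le_two) (hVext j) (T.isOpen_piece j).measurableSet
      (T.isBounded_piece hΩb j)
  rw [← Finset.sum_add_distrib, ← hfirst.unique hcrit]
  refine Finset.sum_congr rfl fun j _ => (T.integral_neg_pdiv_add_mul_add_boundary hΩb j
    (continuous_lagU hL₁ ((hUext j).of_le one_le_two)) (hVext j)
    (contDiff_lagP hL (hUext j) (by norm_num))).symm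

/-- discrete Euler–Lagrange equations: for a continuous piecewise-`C²`
function `U` and continuous piecewise-`C¹` test function `V` over a Gauss–Green
partition (triangulation) of `Ω`, criticality of the action in the direction `V`
yields the elementwise Euler–Lagrange identity with per-element boundary terms. -/
theorem discrete_euler_lagrange {d M : ℕ} (Ω : Set (Euc d))
    (hΩo : IsOpen Ω) (hΩb : Bornology.IsBounded Ω)
    (T : GGPartition d Ω M)
    (L : Euc d → ℝ → Euc d → ℝ)
    (hL : ContDiff ℝ 2 (fun q : Euc d × ℝ × Euc d => L q.1 q.2.1 q.2.2))
    (U : Euc d → ℝ) (hU : ContinuousOn U (closure Ω))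
    (Uext : Fin M → Euc d → ℝ) (hUext : ∀ j, ContDiff ℝ 2 (Uext j))
    (hUagree : ∀ j, ∀ x ∈ T.piece j, U x = Uext j x)
    (V : Euc d → ℝ) (hV : ContinuousOn V (closure Ω))
    (Vext : Fin M → Euc d → ℝ) (hVext : ∀ j, ContDiff ℝ 1 (Vext j))
    (hVagree : ∀ j, ∀ x ∈ T.piece j, V x = Vext j x)
    (hcrit : HasDerivAt
      (fun ε : ℝ => ∑ j, ∫ x in T.piece j,
        L x (Uext j x + ε * Vext j x)
          (gradient (Uext j) x + ε • gradient (Vext j) x))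
      0 0) :
    0 = (∑ j, ∫ x in T.piece j,
          (-(pdiv (lagP L (Uext j)) x) + lagU L (Uext j) x) * Vext j x)
      + ∑ j, ∫ x, ⟪lagP L (Uext j) x, T.normal j x⟫ * Vext j x ∂(T.σ j) :=
  discrete_euler_lagrange_general Ω hΩb T L hL Uext hUext Vext hVext hcrit
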